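/- Let n ≥ 2, η ∈ [0,1], β ∈ ℤ, and let t ∈ ℝ^n be a unit vector. Let T : {−1,0,1}^n → ℝ^n be any function satisfying ∑_{α ∈ {−1,0,1}^n} α ⊗ T_α = (β(e_1 + e_2)) ⊗ t as n×n matrices. Then ∑_{α ∈ {−1,0,1}^n} ψ̃(α, T_α) ≥ |β| · inf { ψ̃(e_1, z_1) + ψ̃(e_2, z_2) + ψ̃(e_1 − e_2, (z_2 − z_1)/2) + ψ̃(e_1 + e_2, t − (z_1 + z_2)/2) : z_1, z_2 ∈ ℝ^n }. -/

import Mathlib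

/-- The positively one-homogeneous extension
`ψ̃(b,T) = |T||b|² + η (b·T)²/|T|`, with `ψ̃(b,0) = 0`. -/
noncomputable def psiT (n : ℕ) (η : ℝ) (b T : EuclideanSpace ℝ (Fin n)) : ℝ :=
  ‖T‖ * ‖b‖ ^ 2 + η * (inner ℝ b T : ℝ) ^ 2 / ‖T‖

/-- The cube `{-1,0,1}ⁿ` of integer vectors with entries in `{-1,0,1}`. -/
abbrev SignCube (n : ℕ) : Type := Fin n → ({-1, 0, 1} : Finset ℤ)

/-- The real vector associated to an element of the cube `{-1,0,1}ⁿ`. -/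
noncomputable def cubeE {n : ℕ} (α : SignCube n) : EuclideanSpace ℝ (Fin n) :=
  WithLp.toLp 2 (fun i => ((α i : ℤ) : ℝ))

section Aux

variable {n : ℕ} {η : ℝ}

lemma psiT_nonneg (hη : 0 ≤ η) (b T : EuclideanSpace ℝ (Fin n)) : 0 ≤ psiT n η b T := by
  unfold psiT; positivity

lemma psiT_zero_right (b : EuclideanSpace ℝ (Fin n)) : psiT n η b 0 = 0 := by
  simp [psiT]

lemma psiT_zero_left (T : EuclideanSpace ℝ (Fin n)) : psiT n η 0 T = 0 := by
  simp [psiT]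

lemma psiT_smul_right (b T : EuclideanSpace ℝ (Fin n)) (c : ℝ) :
    psiT n η b (c • T) = |c| * psiT n η b T := by
  rcases eq_or_ne T 0 with rfl | hT
  · simp [psiT]
  rcases eq_or_ne c 0 with rfl | hc
  · simp [psiT]
  have hT' : ‖T‖ ≠ 0 := by simpa using hT
  have hc' : |c| ≠ 0 := abs_ne_zero.2 hc
  unfold psiT
  rw [norm_smul, real_inner_smul_right]
  rw [Real.norm_eq_abs]
  field_simp
  linear_combination -(η * (inner ℝ b T) ^ 2) * (sq_abs c)

lemma psiT_smul_left (b T : EuclideanSpace ℝ (Fin n)) (s : ℝ) :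
    psiT n η (s • b) T = s ^ 2 * psiT n η b T := by
  unfold psiT
  rw [norm_smul, real_inner_smul_left, Real.norm_eq_abs]
  rw [mul_pow, sq_abs]
  ring

lemma step_mono (hη0 : 0 ≤ η) (hη1 : η ≤ 1) {b2 q w w' : ℝ} (hb2 : 0 ≤ b2)
    (hw : 0 < w) (hww' : w ≤ w') (hq : 0 ≤ q) (hqb : q ≤ b2 * w ^ 2) :
    w * b2 + η * q / w ≤ w' * b2 + η * q / w' := by
  have hw' : 0 < w' := lt_of_lt_of_le hw hww'
  have key : η * q ≤ b2 * (w * w') := by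
    nlinarith [mul_nonneg (sub_nonneg.2 hη1) hq,
      mul_nonneg (mul_nonneg hb2 hw.le) (sub_nonneg.2 hww')]
  have hfac : 0 ≤ b2 - η * q / (w * w') := by
    rw [sub_nonneg, div_le_iff₀ (by positivity)]
    linarith
  have hid : w' * b2 + η * q / w' - (w * b2 + η * q / w)
      = (w' - w) * (b2 - η * q / (w * w')) := by
    field_simp
    ring
  nlinarith [mul_nonneg (sub_nonneg.2 hww') hfac]

lemma step_engel {u v x y : ℝ} (hx : 0 < x) (hy : 0 < y) :
    (u + v) ^ 2 / (x + y) ≤ u ^ 2 / x + v ^ 2 / y := by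
  rw [div_add_div _ _ hx.ne' hy.ne', div_le_div_iff₀ (by linarith) (by positivity)]
  nlinarith [sq_nonneg (u * y - v * x)]

lemma psiT_add_le (hη0 : 0 ≤ η) (hη1 : η ≤ 1) (b S S' : EuclideanSpace ℝ (Fin n)) :
    psiT n η b (S + S') ≤ psiT n η b S + psiT n η b S' := by
  rcases eq_or_ne S 0 with rfl | hS
  · simp [psiT_zero_right]
  rcases eq_or_ne S' 0 with rfl | hS'
  · simp [psiT_zero_right]
  rcases eq_or_ne (S + S') 0 with h0 | h0
  · rw [h0, psiT_zero_right]
    exact add_nonneg (psiT_nonneg hη0 _ _) (psiT_nonneg hη0 _ _)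
  have hx : 0 < ‖S‖ := norm_pos_iff.2 hS
  have hy : 0 < ‖S'‖ := norm_pos_iff.2 hS'
  have hw : 0 < ‖S + S'‖ := norm_pos_iff.2 h0
  have htri : ‖S + S'‖ ≤ ‖S‖ + ‖S'‖ := norm_add_le _ _
  have hcs : (inner ℝ b (S + S') : ℝ) ^ 2 ≤ ‖b‖ ^ 2 * ‖S + S'‖ ^ 2 := by
    have := abs_real_inner_le_norm b (S + S')
    nlinarith [abs_nonneg (inner ℝ b (S + S') : ℝ), sq_abs (inner ℝ b (S + S') : ℝ)]
  unfold psiT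
  have h1 : ‖S + S'‖ * ‖b‖ ^ 2 + η * (inner ℝ b (S + S') : ℝ) ^ 2 / ‖S + S'‖
      ≤ (‖S‖ + ‖S'‖) * ‖b‖ ^ 2 + η * (inner ℝ b (S + S') : ℝ) ^ 2 / (‖S‖ + ‖S'‖) := by
    exact step_mono hη0 hη1 (by positivity) hw htri (by positivity) (by nlinarith)
  have h2 : (inner ℝ b (S + S') : ℝ) ^ 2 / (‖S‖ + ‖S'‖)
      ≤ (inner ℝ b S : ℝ) ^ 2 / ‖S‖ + (inner ℝ b S' : ℝ) ^ 2 / ‖S'‖ := by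
    rw [inner_add_right]
    exact step_engel hx hy
  refine le_trans h1 ?_
  have h4 := mul_le_mul_of_nonneg_left h2 hη0
  rw [mul_add] at h4
  rw [mul_div_assoc, mul_div_assoc, mul_div_assoc]
  linarith [h4]

lemma psiT_sum_le (hη0 : 0 ≤ η) (hη1 : η ≤ 1) (b : EuclideanSpace ℝ (Fin n))
    {ι : Type*} (s : Finset ι) (f : ι → EuclideanSpace ℝ (Fin n)) :
    psiT n η b (∑ i ∈ s, f i) ≤ ∑ i ∈ s, psiT n η b (f i) := by
  classical
  induction s using Finset.cons_induction with
  | empty => simp [psiT_zero_right]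
  | cons a s ha ih =>
      rw [Finset.sum_cons, Finset.sum_cons]
      exact le_trans (psiT_add_le hη0 hη1 _ _ _) (by linarith)

/-- Key pointwise comparison: dropping an orthogonal integer part only decreases `psiT`. -/
lemma psiT_drop (hη0 : 0 ≤ η) (hη1 : η ≤ 1) (b r T : EuclideanSpace ℝ (Fin n))
    (hbr : (inner ℝ b r : ℝ) = 0) (hb : ‖b‖ ^ 2 ≤ 2) (hr : r = 0 ∨ 1 ≤ ‖r‖ ^ 2) :
    psiT n η b T ≤ psiT n η (b + r) T := by
  rcases hr with rfl | hr
  · simp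
  rcases eq_or_ne T 0 with rfl | hT
  · simp [psiT_zero_right]
  have hTn : 0 < ‖T‖ := norm_pos_iff.2 hT
  set u := (inner ℝ b T : ℝ) with hu
  set v := (inner ℝ r T : ℝ) with hv
  set B := ‖b‖ ^ 2 with hB
  set R := ‖r‖ ^ 2 with hR
  have hB0 : 0 ≤ B := by positivity
  have hR0 : 0 ≤ R := by positivity
  have hnormsum : ‖b + r‖ ^ 2 = B + R := by
    rw [hB, hR, norm_add_sq_real, hbr]; ring
  have hinner : (inner ℝ (b + r) T : ℝ) = u + v := by rw [inner_add_left]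
  have hbessel : R * u ^ 2 + B * v ^ 2 ≤ B * R * ‖T‖ ^ 2 := by
    set w : EuclideanSpace ℝ (Fin n) := (R * u) • b + (B * v) • r with hw
    have hwT : (inner ℝ w T : ℝ) = R * u ^ 2 + B * v ^ 2 := by
      rw [hw, inner_add_left, real_inner_smul_left, real_inner_smul_left, ← hu, ← hv]; ring
    have hwb : ‖w‖ ^ 2 = B * R * (R * u ^ 2 + B * v ^ 2) := by
      rw [hw, norm_add_sq_real, norm_smul, norm_smul, real_inner_smul_left,
        real_inner_smul_right, hbr]
      simp only [Real.norm_eq_abs, mul_pow, sq_abs]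
      rw [← hB, ← hR]; ring
    have hcs := real_inner_mul_inner_self_le w T
    rw [hwT] at hcs
    rw [real_inner_self_eq_norm_sq, real_inner_self_eq_norm_sq] at hcs
    rw [hwb] at hcs
    set K := R * u ^ 2 + B * v ^ 2 with hK
    have hK0 : 0 ≤ K := by positivity
    rcases eq_or_lt_of_le hK0 with h | h
    · rw [← h]; positivity
    · nlinarith [hcs]
  unfold psiT
  rw [hnormsum, hinner, ← hu, ← hB]
  have hbz : B = 0 → u = 0 := by
    intro h
    have h2 : ‖b‖ ^ 2 = 0 := by rw [← hB]; exact h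
    have : b = 0 := by simpa using pow_eq_zero_iff (two_ne_zero) |>.mp h2
    rw [hu, this]; simp
  clear_value u v B R
  clear hu hv hB hR hbr hinner hnormsum hT
  rcases eq_or_lt_of_le hB0 with hBz | hBpos
  · rw [← hBz, hbz hBz.symm]
    have h1 : (0:ℝ) ≤ ‖T‖ * (0 + R) + η * (0 + v) ^ 2 / ‖T‖ := by positivity
    simpa using h1
  · have hcoef : 0 ≤ (1 + η) * R - η ^ 2 * B := by
      nlinarith [mul_nonneg (sub_nonneg.2 hη1) (by linarith : (0:ℝ) ≤ 1 + 2 * η),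
        mul_nonneg (sub_nonneg.2 hb) (sq_nonneg η),
        mul_nonneg (by linarith : (0:ℝ) ≤ 1 + η) (sub_nonneg.2 hr)]
    have hP : 0 ≤ R * u ^ 2 + B * (1 + η) * v ^ 2 + 2 * η * B * u * v := by
      nlinarith [sq_nonneg (η * B * u + B * (1 + η) * v),
        mul_nonneg (mul_nonneg hcoef hB0) (sq_nonneg u),
        mul_pos hBpos (show (0:ℝ) < 1 + η by linarith)]
    have hBE : 0 ≤ B * (R * ‖T‖ ^ 2 + η * ((u + v) ^ 2 - u ^ 2)) := by
      nlinarith [hbessel, hP]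
    have key : 0 ≤ R * ‖T‖ ^ 2 + η * ((u + v) ^ 2 - u ^ 2) := by
      nlinarith [hBE, hBpos]
    have expand : ‖T‖ * (B + R) + η * (u + v) ^ 2 / ‖T‖ - (‖T‖ * B + η * u ^ 2 / ‖T‖)
        = (R * ‖T‖ ^ 2 + η * ((u + v) ^ 2 - u ^ 2)) / ‖T‖ := by
      field_simp
      ring
    nlinarith [div_nonneg key hTn.le, expand]

/-- Decomposition of `psiT` at a vector `c₁ • a + c₂ • b` with `c₁, c₂ ∈ {-1,0,1}`. -/
lemma psiT_decomp (a b T : EuclideanSpace ℝ (Fin n)) (c₁ c₂ : ℝ)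
    (h1 : c₁ = -1 ∨ c₁ = 0 ∨ c₁ = 1) (h2 : c₂ = -1 ∨ c₂ = 0 ∨ c₂ = 1) :
    psiT n η a ((if c₂ = 0 then c₁ else 0) • T) +
    psiT n η b ((if c₁ = 0 then c₂ else 0) • T) +
    psiT n η (a + b) ((if c₁ = c₂ then c₁ else 0) • T) +
    psiT n η (a - b) ((if c₁ = -c₂ then c₁ else 0) • T) =
    psiT n η (c₁ • a + c₂ • b) T := by
  have hnegT : ∀ x : EuclideanSpace ℝ (Fin n), psiT n η x (-T) = psiT n η x T := by
    intro x; rw [← neg_one_smul ℝ T, psiT_smul_right]; norm_num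
  have hneg : ∀ x : EuclideanSpace ℝ (Fin n), psiT n η (-x) T = psiT n η x T := by
    intro x; rw [← neg_one_smul ℝ x, psiT_smul_left]; norm_num
  rcases h1 with rfl | rfl | rfl <;> rcases h2 with rfl | rfl | rfl <;>
    norm_num [psiT_smul_right, psiT_zero_right, psiT_zero_left]
  all_goals try simp only [hnegT]
  all_goals try rfl
  all_goals try rw [show (-a + -b : EuclideanSpace ℝ (Fin n)) = -(a+b) by abel, hneg]
  all_goals try rw [show (-a + b : EuclideanSpace ℝ (Fin n)) = -(a + -b) by abel, hneg]
  all_goals try rw [hneg]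
  all_goals try rw [show (a - b : EuclideanSpace ℝ (Fin n)) = a + -b by abel]

lemma sign_mem {α : SignCube n} (j : Fin n) :
    ((α j : ℤ) : ℝ) = -1 ∨ ((α j : ℤ) : ℝ) = 0 ∨ ((α j : ℤ) : ℝ) = 1 := by
  have := (α j).2
  simp only [Finset.mem_insert, Finset.mem_singleton] at this
  rcases this with h | h | h <;> simp [h]

lemma cube_step (hη0 : 0 ≤ η) (hη1 : η ≤ 1) {i0 i1 : Fin n} (h01 : i0 ≠ i1)
    (α : SignCube n) (T : EuclideanSpace ℝ (Fin n)) :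
    psiT n η (((α i0 : ℤ) : ℝ) • (EuclideanSpace.single i0 (1:ℝ)) +
              ((α i1 : ℤ) : ℝ) • (EuclideanSpace.single i1 (1:ℝ))) T ≤
    psiT n η (cubeE α) T := by
  set c₁ : ℝ := ((α i0 : ℤ) : ℝ) with hc₁
  set c₂ : ℝ := ((α i1 : ℤ) : ℝ) with hc₂
  set b : EuclideanSpace ℝ (Fin n) :=
    c₁ • (EuclideanSpace.single i0 (1:ℝ)) + c₂ • (EuclideanSpace.single i1 (1:ℝ)) with hb
  set r : EuclideanSpace ℝ (Fin n) := cubeE α - b with hr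
  have hbj : ∀ j, b j = (if j = i0 then c₁ else 0) + (if j = i1 then c₂ else 0) := by
    intro j
    simp [hb, EuclideanSpace.single_apply, mul_ite]
  have hrj : ∀ j, r j = if j = i0 then 0 else if j = i1 then 0 else ((α j : ℤ) : ℝ) := by
    intro j
    have : r j = cubeE α j - b j := rfl
    rw [this, hbj j]
    by_cases h0 : j = i0
    · subst h0; simp [cubeE, h01, hc₁]
    · by_cases h1 : j = i1
      · subst h1; simp [cubeE, h0, hc₂]
      · simp [cubeE, h0, h1]
  have hsum : cubeE α = b + r := by rw [hr]; abel
  have hbr : (inner ℝ b r : ℝ) = 0 := by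
    rw [PiLp.inner_apply]
    apply Finset.sum_eq_zero
    intro j _
    rw [RCLike.inner_apply, conj_trivial]
    by_cases h0 : j = i0
    · subst h0; rw [hrj]; simp
    · by_cases h1 : j = i1
      · subst h1; rw [hrj]; simp [h01.symm]
      · rw [hbj]; simp [h0, h1]
  have hc₁sq : c₁ ^ 2 ≤ 1 := by
    rcases sign_mem (α := α) i0 with h | h | h <;> rw [← hc₁] at h <;> rw [h] <;> norm_num
  have hc₂sq : c₂ ^ 2 ≤ 1 := by
    rcases sign_mem (α := α) i1 with h | h | h <;> rw [← hc₂] at h <;> rw [h] <;> norm_num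
  have hbnorm : ‖b‖ ^ 2 ≤ 2 := by
    have hn2 : ‖b‖ ^ 2 = ∑ i, (b i) ^ 2 := by
      rw [← real_inner_self_eq_norm_sq, PiLp.inner_apply]
      simp [RCLike.inner_apply, conj_trivial, sq]
    rw [hn2]
    have hsub : ∑ i, (b i) ^ 2 = ∑ i ∈ ({i0, i1} : Finset (Fin n)), (b i) ^ 2 := by
      refine (Finset.sum_subset (Finset.subset_univ _) ?_).symm
      intro x _ hx
      simp only [Finset.mem_insert, Finset.mem_singleton, not_or] at hx
      rw [hbj]
      simp [hx.1, hx.2]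
    rw [hsub, Finset.sum_pair h01, hbj, hbj]
    simp [h01, h01.symm]
    nlinarith [hc₁sq, hc₂sq]
  have hrcase : r = 0 ∨ 1 ≤ ‖r‖ ^ 2 := by
    by_cases h : r = 0
    · exact Or.inl h
    right
    obtain ⟨j, hj⟩ : ∃ j, r j ≠ 0 := by
      by_contra hc
      push_neg at hc
      exact h (by ext j; exact hc j)
    have hj0 : j ≠ i0 := by intro h0; apply hj; rw [hrj]; simp [h0]
    have hj1 : j ≠ i1 := by intro h1; apply hj; rw [hrj]; simp [h1, hj0]
    have hrjval : r j = ((α j : ℤ) : ℝ) := by rw [hrj]; simp [hj0, hj1]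
    have hrsq : (r j) ^ 2 = 1 := by
      rw [hrjval]
      rcases sign_mem (α := α) j with h | h | h
      · rw [h]; norm_num
      · exfalso; apply hj; rw [hrjval, h]
      · rw [h]; norm_num
    have hn2 : ‖r‖ ^ 2 = ∑ i, (r i) ^ 2 := by
      rw [← real_inner_self_eq_norm_sq, PiLp.inner_apply]
      simp [RCLike.inner_apply, conj_trivial, sq]
    rw [hn2, ← hrsq]
    exact Finset.single_le_sum (f := fun i => (r i) ^ 2) (fun i _ => sq_nonneg _)
      (Finset.mem_univ j)
  rw [hsum]
  exact psiT_drop hη0 hη1 b r T hbr hbnorm hrcase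

lemma coef1 (c₁ c₂ : ℝ) (h1 : c₁ = -1 ∨ c₁ = 0 ∨ c₁ = 1) (h2 : c₂ = -1 ∨ c₂ = 0 ∨ c₂ = 1) :
    (if c₂ = 0 then c₁ else 0) + (if c₁ = c₂ then c₁ else 0) + (if c₁ = -c₂ then c₁ else 0)
      = c₁ := by
  rcases h1 with rfl | rfl | rfl <;> rcases h2 with rfl | rfl | rfl <;> norm_num

lemma coef2 (c₁ c₂ : ℝ) (h1 : c₁ = -1 ∨ c₁ = 0 ∨ c₁ = 1) (h2 : c₂ = -1 ∨ c₂ = 0 ∨ c₂ = 1) :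
    (if c₁ = 0 then c₂ else 0) + (if c₁ = c₂ then c₁ else 0) - (if c₁ = -c₂ then c₁ else 0)
      = c₂ := by
  rcases h1 with rfl | rfl | rfl <;> rcases h2 with rfl | rfl | rfl <;> norm_num

end Aux

/-- Lower bound for `b = β(e₁+e₂)`: for every `T : {-1,0,1}ⁿ → ℝⁿ` with
`∑ α ⊗ T_α = (β(e₁+e₂)) ⊗ t`, the energy `∑ ψ̃(α, T_α)` is at least
`|β|` times the infimum over `z₁, z₂ ∈ ℝⁿ` of
`ψ̃(e₁,z₁) + ψ̃(e₂,z₂) + ψ̃(e₁−e₂,(z₂−z₁)/2) + ψ̃(e₁+e₂, t−(z₁+z₂)/2)`. -/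
theorem lower_bound_beta_e1_plus_e2 (n : ℕ) (hn : 2 ≤ n)
    (η : ℝ) (hη : η ∈ Set.Icc (0 : ℝ) 1) (β : ℤ)
    (t : EuclideanSpace ℝ (Fin n)) (ht : ‖t‖ = 1)
    (T : SignCube n → EuclideanSpace ℝ (Fin n))
    (hmoment :
      (∑ α : SignCube n, (Matrix.of fun k j => cubeE α k * T α j : Matrix (Fin n) (Fin n) ℝ)) =
        (Matrix.of fun k j =>
          (((β : ℝ) • ((EuclideanSpace.single (⟨0, by omega⟩ : Fin n) 1 : EuclideanSpace ℝ (Fin n)) +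
            EuclideanSpace.single (⟨1, by omega⟩ : Fin n) 1) : EuclideanSpace ℝ (Fin n))) k * t j :
          Matrix (Fin n) (Fin n) ℝ)) :
    (|β| : ℝ) *
      (⨅ z : EuclideanSpace ℝ (Fin n) × EuclideanSpace ℝ (Fin n),
        (psiT n η (EuclideanSpace.single (⟨0, by omega⟩ : Fin n) 1) z.1 +
         psiT n η (EuclideanSpace.single (⟨1, by omega⟩ : Fin n) 1) z.2 +
         psiT n η ((EuclideanSpace.single (⟨0, by omega⟩ : Fin n) 1 : EuclideanSpace ℝ (Fin n)) -
            EuclideanSpace.single (⟨1, by omega⟩ : Fin n) 1) ((1 / 2 : ℝ) • (z.2 - z.1)) +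
         psiT n η ((EuclideanSpace.single (⟨0, by omega⟩ : Fin n) 1 : EuclideanSpace ℝ (Fin n)) +
            EuclideanSpace.single (⟨1, by omega⟩ : Fin n) 1) (t - (1 / 2 : ℝ) • (z.1 + z.2)))) ≤
      ∑ α : SignCube n, psiT n η (cubeE α) (T α) := by
  classical
  obtain ⟨hη0, hη1⟩ := hη
  set i0 : Fin n := ⟨0, by omega⟩ with hi0
  set i1 : Fin n := ⟨1, by omega⟩ with hi1
  have h01 : i0 ≠ i1 := by
    simp [hi0, hi1, Fin.ext_iff]
  set e1 : EuclideanSpace ℝ (Fin n) := EuclideanSpace.single i0 (1:ℝ) with he1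
  set e2 : EuclideanSpace ℝ (Fin n) := EuclideanSpace.single i1 (1:ℝ) with he2
  set c₁ : SignCube n → ℝ := fun α => ((α i0 : ℤ) : ℝ) with hc₁
  set c₂ : SignCube n → ℝ := fun α => ((α i1 : ℤ) : ℝ) with hc₂
  set w₁ : SignCube n → ℝ := fun α => if c₂ α = 0 then c₁ α else 0 with hw₁
  set w₂ : SignCube n → ℝ := fun α => if c₁ α = 0 then c₂ α else 0 with hw₂
  set wp : SignCube n → ℝ := fun α => if c₁ α = c₂ α then c₁ α else 0 with hwp
  set wm : SignCube n → ℝ := fun α => if c₁ α = -c₂ α then c₁ α else 0 with hwm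
  set S₁ : EuclideanSpace ℝ (Fin n) := ∑ α : SignCube n, w₁ α • T α with hS₁
  set S₂ : EuclideanSpace ℝ (Fin n) := ∑ α : SignCube n, w₂ α • T α with hS₂
  set Sp : EuclideanSpace ℝ (Fin n) := ∑ α : SignCube n, wp α • T α with hSp
  set Sm : EuclideanSpace ℝ (Fin n) := ∑ α : SignCube n, wm α • T α with hSm
  -- Step A: lower bound for the total energy
  have hptw : ∀ α : SignCube n,
      psiT n η e1 (w₁ α • T α) + psiT n η e2 (w₂ α • T α) +
      psiT n η (e1 + e2) (wp α • T α) + psiT n η (e1 - e2) (wm α • T α) ≤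
      psiT n η (cubeE α) (T α) := by
    intro α
    rw [hw₁, hw₂, hwp, hwm]
    rw [psiT_decomp e1 e2 (T α) (c₁ α) (c₂ α) (sign_mem i0) (sign_mem i1)]
    exact cube_step hη0 hη1 h01 α (T α)
  have hA : psiT n η e1 S₁ + psiT n η e2 S₂ + psiT n η (e1 + e2) Sp +
      psiT n η (e1 - e2) Sm ≤ ∑ α : SignCube n, psiT n η (cubeE α) (T α) := by
    have h1 := psiT_sum_le hη0 hη1 e1 Finset.univ (fun α => w₁ α • T α)
    have h2 := psiT_sum_le hη0 hη1 e2 Finset.univ (fun α => w₂ α • T α)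
    have h3 := psiT_sum_le hη0 hη1 (e1 + e2) Finset.univ (fun α => wp α • T α)
    have h4 := psiT_sum_le hη0 hη1 (e1 - e2) Finset.univ (fun α => wm α • T α)
    have h5 : ∑ α : SignCube n, (psiT n η e1 (w₁ α • T α) + psiT n η e2 (w₂ α • T α) +
        psiT n η (e1 + e2) (wp α • T α) + psiT n η (e1 - e2) (wm α • T α)) ≤
        ∑ α : SignCube n, psiT n η (cubeE α) (T α) :=
      Finset.sum_le_sum (fun α _ => hptw α)
    simp only [Finset.sum_add_distrib] at h5
    rw [hS₁, hS₂, hSp, hSm]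
    linarith [h1, h2, h3, h4, h5]
  -- Step B: componentwise moment identities
  have hrow : ∀ (i : Fin n) (j : Fin n),
      (∑ α : SignCube n, cubeE α i * T α j) =
      (β : ℝ) * ((e1 + e2) i) * t j := by
    intro i j
    have h := congrFun (congrFun hmoment i) j
    simp only [Matrix.sum_apply, Matrix.of_apply] at h
    rw [h]
    simp only [PiLp.smul_apply, smul_eq_mul]
    try ring
  have hrow1 : ∀ j, (∑ α : SignCube n, c₁ α * T α j) = (β : ℝ) * t j := by
    intro j
    have := hrow i0 j
    have he : (e1 + e2) i0 = 1 := by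
      simp [he1, he2, PiLp.add_apply, EuclideanSpace.single_apply, h01, h01.symm]
    rw [he] at this
    simpa [cubeE, hc₁] using this
  have hrow2 : ∀ j, (∑ α : SignCube n, c₂ α * T α j) = (β : ℝ) * t j := by
    intro j
    have := hrow i1 j
    have he : (e1 + e2) i1 = 1 := by
      simp [he1, he2, PiLp.add_apply, EuclideanSpace.single_apply, h01, h01.symm]
    rw [he] at this
    simpa [cubeE, hc₂] using this
  have hSapp : ∀ (w : SignCube n → ℝ) (j : Fin n),
      ((∑ α : SignCube n, w α • T α : EuclideanSpace ℝ (Fin n)) j) =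
      ∑ α : SignCube n, w α * T α j := by
    intro w j
    rw [WithLp.ofLp_sum, Finset.sum_apply]
    rfl
  have hrowS1 : ∀ j, S₁ j + Sp j + Sm j = (β : ℝ) * t j := by
    intro j
    rw [hS₁, hSp, hSm]
    rw [hSapp w₁ j, hSapp wp j, hSapp wm j, ← Finset.sum_add_distrib, ← Finset.sum_add_distrib]
    rw [← hrow1 j]
    apply Finset.sum_congr rfl
    intro α _
    have hco := coef1 (c₁ α) (c₂ α) (sign_mem i0) (sign_mem i1)
    simp only [hw₁, hwp, hwm]
    linear_combination (T α j) * hco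
  have hrowS2 : ∀ j, S₂ j + Sp j - Sm j = (β : ℝ) * t j := by
    intro j
    rw [hS₂, hSp, hSm]
    rw [hSapp w₂ j, hSapp wp j, hSapp wm j, ← Finset.sum_add_distrib, ← Finset.sum_sub_distrib]
    rw [← hrow2 j]
    apply Finset.sum_congr rfl
    intro α _
    have hco := coef2 (c₁ α) (c₂ α) (sign_mem i0) (sign_mem i1)
    simp only [hw₂, hwp, hwm]
    linear_combination (T α j) * hco
  -- Step C: the infimum bound
  set F : EuclideanSpace ℝ (Fin n) × EuclideanSpace ℝ (Fin n) → ℝ := fun z =>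
    psiT n η e1 z.1 + psiT n η e2 z.2 +
    psiT n η (e1 - e2) ((1 / 2 : ℝ) • (z.2 - z.1)) +
    psiT n η (e1 + e2) (t - (1 / 2 : ℝ) • (z.1 + z.2)) with hF
  have hFnonneg : ∀ z, 0 ≤ F z := by
    intro z
    have h1 := psiT_nonneg (n := n) (η := η) hη0
    exact add_nonneg (add_nonneg (add_nonneg (h1 _ _) (h1 _ _)) (h1 _ _)) (h1 _ _)
  have hbdd : BddBelow (Set.range F) := by
    refine ⟨0, ?_⟩
    rintro x ⟨z, rfl⟩
    exact hFnonneg z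
  rcases eq_or_ne β 0 with rfl | hβ
  · simp only [abs_zero, Int.cast_zero, zero_mul]
    exact Finset.sum_nonneg (fun α _ => psiT_nonneg hη0 _ _)
  · set γ : ℝ := (β : ℝ) with hγdef
    have hγ : γ ≠ 0 := Int.cast_ne_zero.2 hβ
    set z : EuclideanSpace ℝ (Fin n) × EuclideanSpace ℝ (Fin n) := (γ⁻¹ • S₁, γ⁻¹ • S₂)
      with hz
    have hinf : (⨅ z, F z) ≤ F z := ciInf_le hbdd z
    have hv1 : (1 / 2 : ℝ) • ((γ⁻¹ • S₂) - (γ⁻¹ • S₁)) = γ⁻¹ • Sm := by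
      ext j
      simp only [PiLp.smul_apply, PiLp.sub_apply, smul_eq_mul]
      have hA1 := hrowS1 j
      have hA2 := hrowS2 j
      linear_combination (γ⁻¹ / 2) * hA2 - (γ⁻¹ / 2) * hA1
    have hv2 : t - (1 / 2 : ℝ) • ((γ⁻¹ • S₁) + (γ⁻¹ • S₂)) = γ⁻¹ • Sp := by
      ext j
      simp only [PiLp.smul_apply, PiLp.sub_apply, PiLp.add_apply, smul_eq_mul]
      have hA1 := hrowS1 j
      have hA2 := hrowS2 j
      linear_combination (-(γ⁻¹ / 2)) * hA1 + (-(γ⁻¹ / 2)) * hA2 - (t j) * (inv_mul_cancel₀ hγ)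
    have hFz : |γ| * F z = psiT n η e1 S₁ + psiT n η e2 S₂ +
        psiT n η (e1 - e2) Sm + psiT n η (e1 + e2) Sp := by
      rw [hF]
      simp only [hz]
      rw [hv1, hv2]
      rw [psiT_smul_right, psiT_smul_right, psiT_smul_right, psiT_smul_right]
      rw [abs_inv]
      have : |γ| ≠ 0 := abs_ne_zero.2 hγ
      field_simp
      try ring
    have habs : (|β| : ℝ) = |γ| := by
      rw [hγdef]

    calc |γ| * (⨅ z, F z) ≤ |γ| * F z :=
          mul_le_mul_of_nonneg_left hinf (abs_nonneg γ)
      _ = psiT n η e1 S₁ + psiT n η e2 S₂ + psiT n η (e1 - e2) Sm + psiT n η (e1 + e2) Sp :=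
          hFz
      _ ≤ ∑ α : SignCube n, psiT n η (cubeE α) (T α) := by linarith [hA]
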